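/- Let E ⊂ ℝⁿ be closed and non-empty, and suppose there exist 0 < s < 1 and C₀ > 0 such that for every cube Q₀ intersecting E, both 𝓛(s,Q₀,E) and 𝓢(s,Q₀,E) are non-empty and sup 𝓛(s,Q₀,E) ≤ C₀ · inf 𝓢(s,Q₀,E). Then |E| = 0. -/

import Mathlib

open MeasureTheory Set
open scoped Classical

/-- A half-open axis-parallel cube in `ℝⁿ`. -/
structure Cube (n : ℕ) where
  a : Fin n → ℝ
  l : ℝ
  l_pos : 0 < l

namespace Cube

/-- The set of points of the cube. -/
def carrier {n : ℕ} (Q : Cube n) : Set (Fin n → ℝ) :=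
  {x | ∀ i, Q.a i ≤ x i ∧ x i < Q.a i + Q.l}

/-- The volume (Lebesgue measure) of the cube. -/
def vol {n : ℕ} (Q : Cube n) : ℝ := Q.l ^ n

end Cube

/-- `Q` is a dyadic subcube of `Q₀` of generation `j`. -/
def IsDyadic {n : ℕ} (Q₀ Q : Cube n) (j : ℕ) : Prop :=
  Q.l = Q₀.l / 2 ^ j ∧
    ∃ k : Fin n → ℕ, (∀ i, k i < 2 ^ j) ∧ ∀ i, Q.a i = Q₀.a i + (k i : ℝ) * Q₀.l / 2 ^ j

/-- The dyadic system of subcubes of `Q₀`. -/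
def dyadicFamily {n : ℕ} (Q₀ : Cube n) : Set (Cube n) := {Q | ∃ j, IsDyadic Q₀ Q j}

/-- `P` is the dyadic parent of `Q` inside the dyadic system of `Q₀`. -/
def IsParent {n : ℕ} (Q₀ P Q : Cube n) : Prop :=
  ∃ j : ℕ, IsDyadic Q₀ Q (j + 1) ∧ IsDyadic Q₀ P j ∧ Q.carrier ⊆ P.carrier

/-- The family `D_E(Q₀)` of maximal dyadic subcubes of `Q₀` avoiding `E` whose dyadic
parent meets `E`. -/
def DE {n : ℕ} (E : Set (Fin n → ℝ)) (Q₀ : Cube n) : Set (Cube n) :=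
  {Q | Q ∈ dyadicFamily Q₀ ∧ Q.carrier ∩ E = ∅ ∧
    ∀ P : Cube n, IsParent Q₀ P Q → (P.carrier ∩ E).Nonempty}

/-- `Σ_{Q ∈ D_E(Q₀), l(Q) ≥ L} |Q|`. -/
noncomputable def sumGE {n : ℕ} (E : Set (Fin n → ℝ)) (Q₀ : Cube n) (L : ℝ) : ℝ :=
  ∑' Q : {Q : Cube n // Q ∈ DE E Q₀ ∧ L ≤ Q.l}, (Q : Cube n).vol

/-- `Σ_{Q ∈ D_E(Q₀), l(Q) ≤ L} |Q|`. -/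
noncomputable def sumLE {n : ℕ} (E : Set (Fin n → ℝ)) (Q₀ : Cube n) (L : ℝ) : ℝ :=
  ∑' Q : {Q : Cube n // Q ∈ DE E Q₀ ∧ Q.l ≤ L}, (Q : Cube n).vol

/-- `Σ_{Q ∈ D_E(Q₀), l(Q) < L} |Q|`. -/
noncomputable def sumLT {n : ℕ} (E : Set (Fin n → ℝ)) (Q₀ : Cube n) (L : ℝ) : ℝ :=
  ∑' Q : {Q : Cube n // Q ∈ DE E Q₀ ∧ Q.l < L}, (Q : Cube n).vol

/-- `Σ_{Q ∈ D_E(Q₀), l(Q) > L} |Q|`. -/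
noncomputable def sumGT {n : ℕ} (E : Set (Fin n → ℝ)) (Q₀ : Cube n) (L : ℝ) : ℝ :=
  ∑' Q : {Q : Cube n // Q ∈ DE E Q₀ ∧ L < Q.l}, (Q : Cube n).vol

/-- The set `𝓛(t,Q₀,E)`. -/
def Lset {n : ℕ} (t : ℝ) (Q₀ : Cube n) (E : Set (Fin n → ℝ)) : Set ℝ :=
  {L | 0 ≤ L ∧ t * Q₀.vol ≤ sumGE E Q₀ L}

/-- The set `𝓢(t,Q₀,E)`. -/
def Sset {n : ℕ} (t : ℝ) (Q₀ : Cube n) (E : Set (Fin n → ℝ)) : Set ℝ :=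
  {L | 0 ≤ L ∧ t * Q₀.vol ≤ sumLE E Q₀ L}

/-- `𝓛_{Q₀}(t) = sup 𝓛(t,Q₀,E)` (the max, when attained). -/
noncomputable def Lfun {n : ℕ} (E : Set (Fin n → ℝ)) (Q₀ : Cube n) (t : ℝ) : ℝ :=
  sSup (Lset t Q₀ E)

/-- `𝓢_{Q₀}(t) = inf 𝓢(t,Q₀,E)` (the min, when attained). -/
noncomputable def Sfun {n : ℕ} (E : Set (Fin n → ℝ)) (Q₀ : Cube n) (t : ℝ) : ℝ :=
  sInf (Sset t Q₀ E)

/-- The Muckenhoupt class `A_p` (for `p = 1` the `A₁` condition, for `p > 1` the usual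
`A_p` condition), with cubes as the testing family. -/
def IsAp {n : ℕ} (p : ℝ) (w : (Fin n → ℝ) → ℝ) : Prop :=
  (∀ᵐ x, 0 < w x) ∧ LocallyIntegrable w volume ∧
    ∃ C : ℝ, 0 < C ∧ ∀ Q : Cube n,
      if p = 1 then
        (∫ x in Q.carrier, w x) / Q.vol ≤ C * essInf w (volume.restrict Q.carrier)
      else
        ((∫ x in Q.carrier, w x) / Q.vol) *
          ((∫ x in Q.carrier, w x ^ (-1 / (p - 1))) / Q.vol) ^ (p - 1) ≤ C

/-!
If `𝓛(s,Q₀,E)` contains some `L`, the cubes of `D_E(Q₀)`, which are pairwise disjoint and lie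
in `Q₀ \ E`, have total volume at least `s|Q₀|`; hence `|E ∩ Q₀| ≤ (1 - s)|Q₀|` for every cube
`Q₀` meeting `E`. At a point of `E` of Lebesgue density one this fails for the small cubes
`[x - r, x + r)ⁿ`, which agree a.e. with the sup-norm balls `closedBall x r`. So `E` is null.
-/

namespace Cube

variable {n : ℕ}

lemma ext' {Q Q' : Cube n} (ha : Q.a = Q'.a) (hl : Q.l = Q'.l) : Q = Q' := by
  cases Q; cases Q'; simp_all

lemma vol_pos (Q : Cube n) : 0 < Q.vol := pow_pos Q.l_pos n

lemma carrier_eq_pi (Q : Cube n) :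
    Q.carrier = Set.pi univ fun i => Ico (Q.a i) (Q.a i + Q.l) := by
  ext x; simp [carrier, Set.mem_pi]

lemma measurableSet_carrier (Q : Cube n) : MeasurableSet Q.carrier := by
  rw [carrier_eq_pi]
  exact MeasurableSet.univ_pi fun _ => measurableSet_Ico

lemma volume_carrier (Q : Cube n) : volume Q.carrier = ENNReal.ofReal Q.vol := by
  simp [carrier_eq_pi, volume_pi_pi, vol, ENNReal.ofReal_pow Q.l_pos.le]

lemma measureReal_carrier (Q : Cube n) : volume.real Q.carrier = Q.vol := by
  rw [measureReal_def, volume_carrier, ENNReal.toReal_ofReal Q.vol_pos.le]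

lemma volume_carrier_ne_top (Q : Cube n) : volume Q.carrier ≠ ⊤ := by
  rw [volume_carrier]
  exact ENNReal.ofReal_ne_top

def ofCenter (x : Fin n → ℝ) (r : ℝ) (hr : 0 < r) : Cube n :=
  ⟨fun i => x i - r, 2 * r, by positivity⟩

lemma mem_ofCenter (x : Fin n → ℝ) {r : ℝ} (hr : 0 < r) : x ∈ (ofCenter x r hr).carrier :=
  fun i => ⟨by simp [ofCenter, hr.le], by simp only [ofCenter]; linarith⟩

lemma carrier_ofCenter_ae_eq_closedBall (x : Fin n → ℝ) {r : ℝ} (hr : 0 < r) :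
    (ofCenter x r hr).carrier =ᵐ[volume] Metric.closedBall x r := by
  have hend : ∀ i, (ofCenter x r hr).a i + (ofCenter x r hr).l = x i + r := fun i => by
    simp only [ofCenter]; ring
  rw [carrier_eq_pi, closedBall_pi _ hr.le, volume_pi]
  simp_rw [hend, Real.closedBall_eq_Icc]
  exact Measure.pi_Ico_ae_eq_pi_Icc

end Cube

section Dyadic

variable {n : ℕ}

/-- The `i`-th coordinate of the index of the generation-`j` dyadic subcube of `Q₀`
containing `x`. -/
noncomputable def dyadicIndex (Q₀ : Cube n) (j : ℕ) (x : Fin n → ℝ) (i : Fin n) : ℤ :=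
  ⌊(x i - Q₀.a i) * 2 ^ j / Q₀.l⌋

lemma dyadicIndex_eq_ediv (Q₀ : Cube n) (j d : ℕ) (x : Fin n → ℝ) (i : Fin n) :
    dyadicIndex Q₀ j x i = dyadicIndex Q₀ (j + d) x i / 2 ^ d := by
  have h2d : (2 : ℤ) ^ d = ((2 ^ d : ℕ) : ℤ) := by push_cast; rfl
  rw [dyadicIndex, dyadicIndex, h2d, ← Int.floor_div_natCast]
  congr 1
  have := Q₀.l_pos.ne'
  push_cast
  field_simp
  ring

lemma mem_carrier_iff_dyadicIndex {Q₀ Q : Cube n} {j : ℕ} {k : Fin n → ℕ}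
    (hl : Q.l = Q₀.l / 2 ^ j) (ha : ∀ i, Q.a i = Q₀.a i + k i * Q₀.l / 2 ^ j)
    {x : Fin n → ℝ} : x ∈ Q.carrier ↔ ∀ i, dyadicIndex Q₀ j x i = k i := by
  have hc : 0 < Q₀.l / 2 ^ j := div_pos Q₀.l_pos (by positivity)
  refine forall_congr' fun i => ?_
  have hv : (x i - Q₀.a i) * 2 ^ j / Q₀.l = (x i - Q₀.a i) / (Q₀.l / 2 ^ j) := by
    rw [div_div_eq_mul_div]
  rw [dyadicIndex, Int.floor_eq_iff, ha i, hl, hv, le_div_iff₀ hc, div_lt_iff₀ hc,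
    mul_div_assoc]
  push_cast
  constructor <;> rintro ⟨h₁, h₂⟩ <;> constructor <;> linarith

namespace IsDyadic

variable {Q₀ Q Q' : Cube n} {j m : ℕ} {x : Fin n → ℝ}

lemma carrier_subset_of_le (hQ : IsDyadic Q₀ Q j) (hQ' : IsDyadic Q₀ Q' m) (hjm : j ≤ m)
    (hx : x ∈ Q.carrier) (hx' : x ∈ Q'.carrier) : Q'.carrier ⊆ Q.carrier := by
  obtain ⟨hl, k, -, ha⟩ := hQ
  obtain ⟨hl', k', -, ha'⟩ := hQ'
  obtain ⟨d, rfl⟩ := Nat.exists_eq_add_of_le hjm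
  intro y hy
  rw [mem_carrier_iff_dyadicIndex hl ha] at hx ⊢
  rw [mem_carrier_iff_dyadicIndex hl' ha'] at hx' hy
  intro i
  rw [dyadicIndex_eq_ediv Q₀ j d, hy i, ← hx' i, ← dyadicIndex_eq_ediv, hx i]

lemma carrier_subset (hQ : IsDyadic Q₀ Q j) : Q.carrier ⊆ Q₀.carrier := by
  obtain ⟨hl, k, hk, ha⟩ := hQ
  intro y hy
  rw [mem_carrier_iff_dyadicIndex hl ha] at hy
  rw [mem_carrier_iff_dyadicIndex (Q₀ := Q₀) (Q := Q₀) (j := 0) (k := 0) (by simp) (by simp)]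
  intro i
  rw [dyadicIndex_eq_ediv Q₀ 0 j, zero_add, hy i]
  exact Int.ediv_eq_zero_of_lt (by positivity) (by exact_mod_cast hk i)

lemma eq_of_mem (hQ : IsDyadic Q₀ Q j) (hQ' : IsDyadic Q₀ Q' j)
    (hx : x ∈ Q.carrier) (hx' : x ∈ Q'.carrier) : Q = Q' := by
  obtain ⟨hl, k, -, ha⟩ := hQ
  obtain ⟨hl', k', -, ha'⟩ := hQ'
  rw [mem_carrier_iff_dyadicIndex hl ha] at hx
  rw [mem_carrier_iff_dyadicIndex hl' ha'] at hx'
  have hk : k = k' := funext fun i => by exact_mod_cast (hx i).symm.trans (hx' i)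
  exact Cube.ext' (funext fun i => by rw [ha, ha', hk]) (hl.trans hl'.symm)

lemma exists_parent (hQ : IsDyadic Q₀ Q (m + 1)) :
    ∃ P, IsDyadic Q₀ P m ∧ Q.carrier ⊆ P.carrier := by
  obtain ⟨hl, k, hk, ha⟩ := hQ
  let P : Cube n :=
    ⟨fun i => Q₀.a i + (k i / 2 : ℕ) * Q₀.l / 2 ^ m, Q₀.l / 2 ^ m,
      div_pos Q₀.l_pos (by positivity)⟩
  have hP : IsDyadic Q₀ P m :=
    ⟨rfl, fun i => k i / 2, fun i => by
      have := hk i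
      rw [pow_succ] at this
      change k i / 2 < 2 ^ m
      omega, fun i => rfl⟩
  refine ⟨P, hP, fun y hy => ?_⟩
  rw [mem_carrier_iff_dyadicIndex hl ha] at hy
  rw [mem_carrier_iff_dyadicIndex (k := fun i => k i / 2) rfl fun i => rfl]
  intro i
  rw [dyadicIndex_eq_ediv Q₀ m 1, hy i]
  push_cast
  rfl

end IsDyadic

namespace DE

variable {E : Set (Fin n → ℝ)} {Q₀ Q Q' : Cube n}

lemma carrier_subset_diff (hQ : Q ∈ DE E Q₀) : Q.carrier ⊆ Q₀.carrier \ E := by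
  obtain ⟨⟨j, hj⟩, hQE, -⟩ := hQ
  exact fun y hy => ⟨hj.carrier_subset hy, fun hyE => hQE.subset ⟨hy, hyE⟩⟩

/-- Of two cubes of `D_E(Q₀)` through a common point, the one of higher generation has a parent
meeting `E` and contained in the other, which avoids `E`: so the generations agree. -/
lemma eq_of_mem_of_le {j m : ℕ} (hQ : Q ∈ DE E Q₀) (hQ' : Q' ∈ DE E Q₀)
    (hj : IsDyadic Q₀ Q j) (hm : IsDyadic Q₀ Q' m) (hjm : j ≤ m) {x : Fin n → ℝ}
    (hx : x ∈ Q.carrier) (hx' : x ∈ Q'.carrier) : Q = Q' := by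
  rcases hjm.eq_or_lt with rfl | hlt
  · exact hj.eq_of_mem hm hx hx'
  obtain ⟨m, rfl⟩ : ∃ m', m = m' + 1 := ⟨m - 1, by omega⟩
  obtain ⟨P, hP, hQ'P⟩ := hm.exists_parent
  obtain ⟨y, hyP, hyE⟩ := hQ'.2.2 P ⟨m, hm, hP, hQ'P⟩
  have hPQ : P.carrier ⊆ Q.carrier := hj.carrier_subset_of_le hP (by omega) hx (hQ'P hx')
  exact absurd hQ.2.1 (Set.nonempty_iff_ne_empty.1 ⟨y, hPQ hyP, hyE⟩)

lemma pairwiseDisjoint_carrier : (DE E Q₀).PairwiseDisjoint Cube.carrier := by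
  intro Q hQ Q' hQ' hne
  refine Set.disjoint_left.2 fun x hx hx' => hne ?_
  obtain ⟨⟨j, hj⟩, ⟨m, hm⟩⟩ := And.intro hQ.1 hQ'.1
  rcases le_total j m with hjm | hmj
  · exact eq_of_mem_of_le hQ hQ' hj hm hjm hx hx'
  · exact (eq_of_mem_of_le hQ' hQ hm hj hmj hx' hx).symm

end DE

end Dyadic

lemma sumGE_le_measureReal_diff {n : ℕ} (E : Set (Fin n → ℝ)) (Q₀ : Cube n) (L : ℝ) :
    sumGE E Q₀ L ≤ volume.real (Q₀.carrier \ E) := by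
  refine Real.tsum_le_of_sum_le (fun Q => (Q : Cube n).vol_pos.le) fun F => ?_
  have hdisj : PairwiseDisjoint (F : Set {Q : Cube n // Q ∈ DE E Q₀ ∧ L ≤ Q.l})
      fun Q => (Q : Cube n).carrier := fun Q _ Q' _ hne =>
    DE.pairwiseDisjoint_carrier Q.2.1 Q'.2.1 (Subtype.coe_injective.ne hne)
  calc ∑ Q ∈ F, (Q : Cube n).vol
      = volume.real (⋃ Q ∈ F, (Q : Cube n).carrier) := by
        rw [measureReal_biUnion_finset hdisj (fun Q _ => Cube.measurableSet_carrier _)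
          (fun Q _ => Cube.volume_carrier_ne_top _)]
        simp only [Cube.measureReal_carrier]
    _ ≤ volume.real (Q₀.carrier \ E) :=
        measureReal_mono (iUnion₂_subset fun Q _ => DE.carrier_subset_diff Q.2.1)
          (measure_ne_top_of_subset sdiff_subset Q₀.volume_carrier_ne_top)

lemma measureReal_inter_le_of_Lset_nonempty {n : ℕ} {E : Set (Fin n → ℝ)}
    (hE : MeasurableSet E) {s : ℝ} {Q₀ : Cube n} (hL : (Lset s Q₀ E).Nonempty) :
    volume.real (E ∩ Q₀.carrier) ≤ (1 - s) * Q₀.vol := by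
  obtain ⟨L, -, hL⟩ := hL
  have hsplit := measureReal_inter_add_sdiff hE Q₀.volume_carrier_ne_top
  rw [inter_comm, Q₀.measureReal_carrier] at hsplit
  linarith [sumGE_le_measureReal_diff E Q₀ L]

theorem volume_eq_zero_of_forall_measureReal_inter_le {n : ℕ} {E : Set (Fin n → ℝ)}
    (hE : MeasurableSet E) {t : ℝ} (ht : t < 1)
    (h : ∀ Q : Cube n, (Q.carrier ∩ E).Nonempty → volume.real (E ∩ Q.carrier) ≤ t * Q.vol) :
    volume E = 0 := by
  by_contra hE0
  have : (ae (volume.restrict E)).NeBot := ae_neBot.2 (by rwa [Ne, Measure.restrict_eq_zero])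
  obtain ⟨x, hx, hxE⟩ :=
    ((Besicovitch.ae_tendsto_measure_inter_div volume E).and (ae_restrict_mem hE)).exists
  have hratio : ∀ r ∈ Ioi (0 : ℝ), volume (E ∩ Metric.closedBall x r) /
      volume (Metric.closedBall x r) ≤ ENNReal.ofReal t := by
    intro r hr
    set Q := Cube.ofCenter x r hr
    have hQ := Cube.carrier_ofCenter_ae_eq_closedBall x hr
    rw [← measure_congr hQ, ← measure_congr ((ae_eq_refl E).inter hQ), Q.volume_carrier]
    refine ENNReal.div_le_of_le_mul ?_
    rw [← ENNReal.ofReal_mul' Q.vol_pos.le,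
      ← ofReal_measureReal (measure_ne_top_of_subset inter_subset_right Q.volume_carrier_ne_top)]
    exact ENNReal.ofReal_le_ofReal (h Q ⟨x, Cube.mem_ofCenter x hr, hxE⟩)
  have hle := le_of_tendsto hx (eventually_nhdsWithin_of_forall hratio)
  exact (ENNReal.ofReal_lt_one.2 ht).not_ge hle

theorem stmt13_general {n : ℕ} (E : Set (Fin n → ℝ)) (hE : IsClosed E)
    (s C₀ : ℝ) (hs : s ∈ Set.Ioo (0 : ℝ) 1)
    (h : ∀ Q₀ : Cube n, (Q₀.carrier ∩ E).Nonempty →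
      (Lset s Q₀ E).Nonempty ∧ (Sset s Q₀ E).Nonempty ∧
        sSup (Lset s Q₀ E) ≤ C₀ * sInf (Sset s Q₀ E)) :
    volume E = 0 :=
  volume_eq_zero_of_forall_measureReal_inter_le hE.measurableSet (sub_lt_self 1 hs.1)
    fun Q hQ => measureReal_inter_le_of_Lset_nonempty hE.measurableSet (h Q hQ).1

/-- If for some `0 < s < 1` and `C₀ > 0`, for every cube `Q₀` meeting `E` both
`𝓛(s,Q₀,E)` and `𝓢(s,Q₀,E)` are non-empty and `sup 𝓛(s,Q₀,E) ≤ C₀ inf 𝓢(s,Q₀,E)`,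
then `|E| = 0`. -/
theorem stmt13 {n : ℕ} (E : Set (Fin n → ℝ)) (hE : IsClosed E) (hne : E.Nonempty)
    (s C₀ : ℝ) (hs : s ∈ Set.Ioo (0 : ℝ) 1) (hC₀ : 0 < C₀)
    (h : ∀ Q₀ : Cube n, (Q₀.carrier ∩ E).Nonempty →
      (Lset s Q₀ E).Nonempty ∧ (Sset s Q₀ E).Nonempty ∧
        sSup (Lset s Q₀ E) ≤ C₀ * sInf (Sset s Q₀ E)) :
    volume E = 0 :=
  stmt13_general E hE s C₀ hs h
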